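/- Fix ρ ∈ (0, 1/2]. Define φ_ρ(z) = ((1−2ρz)² − 2ρ) log(1/2 − ρz) − (1+2ρz)² log(1/2 + ρz) for z ∈ [−1/2, 0]. Then φ_ρ is increasing on [−1/2, 0]. -/

import Mathlib

noncomputable def phiRho (ρ z : ℝ) : ℝ :=
  ((1 - 2 * ρ * z) ^ 2 - 2 * ρ) * Real.log (1 / 2 - ρ * z)
    - (1 + 2 * ρ * z) ^ 2 * Real.log (1 / 2 + ρ * z)

open Real Set

/-- Convexity of the (negated) binary entropy-type function on `[1/2, 3/4]`. -/
lemma convexS : ConvexOn ℝ (Set.Icc (1/2 : ℝ) (3/4))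
    (fun a => a * Real.log a + (1 - a) * Real.log (1 - a)) := by
  have h := Real.convexOn_mul_log
  refine ⟨convex_Icc _ _, ?_⟩
  intro x hx y hy α β hα hβ hab
  have hx0 : (0:ℝ) ≤ x := le_trans (by norm_num) hx.1
  have hy0 : (0:ℝ) ≤ y := le_trans (by norm_num) hy.1
  have hx1 : (0:ℝ) ≤ 1 - x := by have := hx.2; linarith
  have hy1 : (0:ℝ) ≤ 1 - y := by have := hy.2; linarith
  have h1 := h.2 (Set.mem_Ici.mpr hx0) (Set.mem_Ici.mpr hy0) hα hβ hab
  have h2 := h.2 (Set.mem_Ici.mpr hx1) (Set.mem_Ici.mpr hy1) hα hβ hab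
  simp only [smul_eq_mul] at h1 h2 ⊢
  have e : 1 - (α * x + β * y) = α * (1 - x) + β * (1 - y) := by linarith
  rw [e]
  linarith

lemma key (a : ℝ) (ha : a ∈ Set.Icc (1/2 : ℝ) (3/4)) :
    a * Real.log a + (1 - a) * Real.log (1 - a) ≤ -(1/2) := by
  have hseg : a ∈ segment ℝ (1/2 : ℝ) (3/4) := by
    rw [segment_eq_Icc (by norm_num)]; exact ha
  have h := convexS.le_on_segment (by norm_num [Set.mem_Icc]) (by norm_num [Set.mem_Icc]) hseg
  have hlog2 : (0.6931471803 : ℝ) < Real.log 2 := Real.log_two_gt_d9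
  have e1 : (1/2 : ℝ) * Real.log (1/2) + (1 - 1/2) * Real.log (1 - 1/2) = -Real.log 2 := by
    rw [show (1:ℝ) - 1/2 = 1/2 by norm_num, Real.log_div one_ne_zero two_ne_zero,
      Real.log_one]
    ring
  have hexp2 : Real.exp 2 < 256/27 := by
    have h9 : Real.exp 1 < 2.7182818286 := Real.exp_one_lt_d9
    have : Real.exp 2 = Real.exp 1 * Real.exp 1 := by
      rw [← Real.exp_add]; norm_num
    rw [this]
    nlinarith [Real.exp_pos 1]
  have h2764 : Real.log (27/256 : ℝ) ≤ -2 := by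
    rw [Real.log_le_iff_le_exp (by norm_num)]
    rw [show (-2 : ℝ) = -(2:ℝ) by norm_num, Real.exp_neg]
    rw [le_inv_comm₀ (by norm_num) (Real.exp_pos 2)]
    linarith
  have e2 : (3/4 : ℝ) * Real.log (3/4) + (1 - 3/4) * Real.log (1 - 3/4)
      = (1/4) * Real.log (27/256) := by
    have : Real.log (27/256 : ℝ) = Real.log ((3/4 : ℝ)^3 * (1/4)) := by norm_num
    rw [this, Real.log_mul (by positivity) (by norm_num), Real.log_pow]
    rw [show (1:ℝ) - 3/4 = 1/4 by norm_num]
    push_cast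
    ring
  rw [e1, e2] at h
  have : max (-Real.log 2) ((1/4) * Real.log (27/256 : ℝ)) ≤ -(1/2) := by
    apply max_le <;> linarith
  linarith

/-- Derivative of `phiRho ρ` at points where both log arguments are positive. -/
lemma phiRho_hasDerivAt (ρ z : ℝ) (ha : 0 < 1/2 - ρ * z) (hb : 0 < 1/2 + ρ * z) :
    HasDerivAt (phiRho ρ)
      (-8 * ρ * ((1/2 - ρ * z) * Real.log (1/2 - ρ * z)
        + (1/2 + ρ * z) * Real.log (1/2 + ρ * z)) - 4 * ρ + 2 * ρ^2 / (1/2 - ρ * z)) z := by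
  have hu : HasDerivAt (fun z : ℝ => 1/2 - ρ * z) (-ρ) z := by
    simpa using ((hasDerivAt_id z).const_mul ρ).const_sub (1/2 : ℝ)
  have hv : HasDerivAt (fun z : ℝ => 1/2 + ρ * z) ρ z := by
    simpa using ((hasDerivAt_id z).const_mul ρ).const_add (1/2 : ℝ)
  have hlu : HasDerivAt (fun z : ℝ => Real.log (1/2 - ρ * z)) (-ρ / (1/2 - ρ * z)) z :=
    hu.log ha.ne'
  have hlv : HasDerivAt (fun z : ℝ => Real.log (1/2 + ρ * z)) (ρ / (1/2 + ρ * z)) z :=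
    hv.log hb.ne'
  have hp : HasDerivAt (fun z : ℝ => (1 - 2 * ρ * z) ^ 2 - 2 * ρ)
      (2 * (1 - 2 * ρ * z) * (-(2 * ρ))) z := by
    have h0 : HasDerivAt (fun z : ℝ => 1 - 2 * ρ * z) (-(2 * ρ)) z := by
      simpa [mul_assoc] using ((hasDerivAt_id z).const_mul (2 * ρ)).const_sub (1 : ℝ)
    simpa using (h0.pow 2).sub_const (2 * ρ)
  have hq : HasDerivAt (fun z : ℝ => (1 + 2 * ρ * z) ^ 2)
      (2 * (1 + 2 * ρ * z) * (2 * ρ)) z := by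
    have h0 : HasDerivAt (fun z : ℝ => 1 + 2 * ρ * z) (2 * ρ) z := by
      simpa [mul_assoc] using ((hasDerivAt_id z).const_mul (2 * ρ)).const_add (1 : ℝ)
    simpa using h0.fun_pow 2
  have H := (hp.fun_mul hlu).fun_sub (hq.fun_mul hlv)
  convert H using 1
  · rfl
  · rfl
  · rfl
  have e1 : 1 - 2 * ρ * z = 2 * (1/2 - ρ * z) := by ring
  have e2 : 1 + 2 * ρ * z = 2 * (1 - (1/2 - ρ * z)) := by ring
  have e3 : 1/2 + ρ * z = 1 - (1/2 - ρ * z) := by ring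
  rw [e1, e2, e3]
  have hb2 : 0 < 1 - (1/2 - ρ * z) := by linarith
  generalize hA : (1/2 : ℝ) - ρ * z = A at ha hb2 ⊢
  field_simp
  ring

/-- For `ρ ∈ (0,1/2]`, the function `φ_ρ` is increasing on `[-1/2, 0]`. -/
theorem stmt6 (ρ : ℝ) (hρ : ρ ∈ Set.Ioc (0 : ℝ) (1 / 2)) :
    MonotoneOn (phiRho ρ) (Set.Icc (-(1 / 2) : ℝ) 0) := by
  obtain ⟨hρ0, hρ2⟩ := hρ
  have hpos : ∀ z ∈ Set.Icc (-(1/2) : ℝ) 0, 0 < 1/2 - ρ * z ∧ 0 < 1/2 + ρ * z := by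
    intro z hz
    obtain ⟨hz1, hz2⟩ := hz
    constructor <;> nlinarith
  apply monotoneOn_of_deriv_nonneg (convex_Icc _ _)
  · intro z hz
    obtain ⟨ha, hb⟩ := hpos z hz
    exact ((phiRho_hasDerivAt ρ z ha hb).continuousAt).continuousWithinAt
  · rw [interior_Icc]
    intro z hz
    obtain ⟨ha, hb⟩ := hpos z (Ioo_subset_Icc_self hz)
    exact ((phiRho_hasDerivAt ρ z ha hb).differentiableAt).differentiableWithinAt
  · rw [interior_Icc]
    intro z hz
    obtain ⟨ha, hb⟩ := hpos z (Ioo_subset_Icc_self hz)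
    rw [(phiRho_hasDerivAt ρ z ha hb).deriv]
    set a := 1/2 - ρ * z with ha_def
    have hbe : 1/2 + ρ * z = 1 - a := by rw [ha_def]; ring
    have haI : a ∈ Set.Icc (1/2 : ℝ) (3/4) := by
      constructor <;> [nlinarith [hz.2]; nlinarith [hz.1]]
    have hS := key a haI
    rw [hbe]
    have h1 : 0 ≤ 2 * ρ^2 / a := by positivity
    nlinarith [mul_pos hρ0 (by linarith [haI.1] : (0:ℝ) < a)]
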